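/- Let α > −1 and R > 0, let p_n be the extended Krall–Laguerre polynomials (with p_{−1} = 0), and define s_n = ȳ_n·p_{n−1} + x̄_{n+1}·p_n + p_{n+1} for n ≥ 0 and s_{−1} = 0. Then for all n ≥ 0: y_n·s_{n−1} + x_{n+1}·s_n + s_{n+1} = x²·p_n(x). In particular, the polynomials p_n satisfy a five-term recurrence relation in which x²·p_n is a linear combination of p_{n−2}, p_{n−1}, p_n, p_{n+1}, p_{n+2}. -/
import Mathlib


open Polynomial

/-- Monic Laguerre polynomials: `L_{-1} = 0`, `L_0 = 1`,
`L_n(x) = (x − (2n−1+α))·L_{n−1}(x) − (n−1)(n−1+α)·L_{n−2}(x)`. -/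
noncomputable def Lag (α : ℝ) : ℕ → ℝ[X]
  | 0 => 1
  | 1 => X - C (1 + α)
  | (n + 2) => (X - C (2 * ((n : ℝ) + 2) - 1 + α)) * Lag α (n + 1)
      - C (((n : ℝ) + 1) * (((n : ℝ) + 1) + α)) * Lag α n

/-- `x_n = α + (2n² + 2(R−1)n − R)/((n−1)+R)`. -/
noncomputable def xKL (α R : ℝ) (n : ℕ) : ℝ :=
  α + (2 * (n : ℝ) ^ 2 + 2 * (R - 1) * (n : ℝ) - R) / (((n : ℝ) - 1) + R)

/-- `y_n = n(n+α)(n+1+R)/(n+R)`. -/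
noncomputable def yKL (α R : ℝ) (n : ℕ) : ℝ :=
  (n : ℝ) * ((n : ℝ) + α) * ((n : ℝ) + 1 + R) / ((n : ℝ) + R)

/-- `x̄_n = α + (2n² + 2(R−1)n − R)/(n+R)`. -/
noncomputable def xbarKL (α R : ℝ) (n : ℕ) : ℝ :=
  α + (2 * (n : ℝ) ^ 2 + 2 * (R - 1) * (n : ℝ) - R) / ((n : ℝ) + R)

/-- `ȳ_n = n(n+α)(n−1+R)/(n+R)`. -/
noncomputable def ybarKL (α R : ℝ) (n : ℕ) : ℝ :=
  (n : ℝ) * ((n : ℝ) + α) * ((n : ℝ) - 1 + R) / ((n : ℝ) + R)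

lemma Lag_rec (α : ℝ) (n : ℕ) :
    Lag α (n+2) = (X - C (2 * ((n : ℝ) + 2) - 1 + α)) * Lag α (n + 1)
      - C (((n : ℝ) + 1) * (((n : ℝ) + 1) + α)) * Lag α n := rfl

lemma evalXLag (α x : ℝ) (k : ℕ) :
    x * (Lag α (k+1)).eval x
      = (Lag α (k+2)).eval x + (2*((k:ℝ)+1)+1+α) * (Lag α (k+1)).eval x
        + (((k:ℝ)+1)*(((k:ℝ)+1)+α)) * (Lag α k).eval x := by
  have h := congrArg (eval x) (Lag_rec α k)
  simp only [eval_mul, eval_sub, eval_add, eval_C, eval_X] at h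
  linear_combination -h

lemma evalXLag0 (α x : ℝ) :
    x * (Lag α 0).eval x = (Lag α 1).eval x + (1+α) * (Lag α 0).eval x := by
  simp [show Lag α 0 = 1 from rfl, show Lag α 1 = X - C (1+α) from rfl]

set_option maxHeartbeats 1000000 in
lemma key0 (α R x : ℝ) (hx : x ≠ 0) (hR : 0 < R)
    (a0 a1 a2 a3 b0 b1 b2 : ℝ)
    (hb0 : x * b0 = a1 + xKL α R 1 * a0)
    (hb1 : x * b1 = a2 + xKL α R 2 * a1 + yKL α R 1 * a0)
    (hb2 : x * b2 = a3 + xKL α R 3 * a2 + yKL α R 2 * a1)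
    (hL0 : x * a0 = a1 + (1+α) * a0)
    (hL1 : x * a1 = a2 + (2+1+α) * a1 + (1*(1+α)) * a0)
    (hL2 : x * a2 = a3 + (2*2+1+α) * a2 + (2*(2+α)) * a1) :
    xKL α R 1 * (xbarKL α R 1 * b0 + b1)
      + (ybarKL α R 1 * b0 + xbarKL α R 2 * b1 + b2) = x^2 * b0 := by
  have h0 : R ≠ 0 := ne_of_gt hR
  have h1 : 1 + R ≠ 0 := by positivity
  have h2 : 2 + R ≠ 0 := by positivity
  have eb0 : b0 = (a1 + xKL α R 1 * a0)/x := by rw [eq_div_iff hx]; linear_combination hb0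
  have eb1 : b1 = (a2 + xKL α R 2 * a1 + yKL α R 1 * a0)/x := by
    rw [eq_div_iff hx]; linear_combination hb1
  have eb2 : b2 = (a3 + xKL α R 3 * a2 + yKL α R 2 * a1)/x := by
    rw [eq_div_iff hx]; linear_combination hb2
  have ea3 : a3 = x*a2 - (2*2+1+α)*a2 - (2*(2+α))*a1 := by linear_combination -hL2
  have ea2 : a2 = x*a1 - (2+1+α)*a1 - (1*(1+α))*a0 := by linear_combination -hL1
  have ea1 : a1 = x*a0 - (1+α)*a0 := by linear_combination -hL0
  rw [eb0, eb1, eb2, ea3, ea2, ea1]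
  simp only [xKL, yKL, xbarKL, ybarKL]
  push_cast
  rw [show (1:ℝ)-1+R = R from by ring, show (2:ℝ)-1+R = 1+R from by ring,
      show (3:ℝ)-1+R = 2+R from by ring]
  field_simp
  ring

set_option maxHeartbeats 2000000 in
lemma key1 (α R x : ℝ) (hx : x ≠ 0) (hR : 0 < R)
    (a0 a1 a2 a3 a4 b0 b1 b2 b3 : ℝ)
    (hb0 : x * b0 = a1 + xKL α R 1 * a0)
    (hb1 : x * b1 = a2 + xKL α R 2 * a1 + yKL α R 1 * a0)
    (hb2 : x * b2 = a3 + xKL α R 3 * a2 + yKL α R 2 * a1)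
    (hb3 : x * b3 = a4 + xKL α R 4 * a3 + yKL α R 3 * a2)
    (hL0 : x * a0 = a1 + (1+α) * a0)
    (hL1 : x * a1 = a2 + (2+1+α) * a1 + (1*(1+α)) * a0)
    (hL2 : x * a2 = a3 + (2*2+1+α) * a2 + (2*(2+α)) * a1)
    (hL3 : x * a3 = a4 + (2*3+1+α) * a3 + (3*(3+α)) * a2) :
    yKL α R 1 * (xbarKL α R 1 * b0 + b1)
      + xKL α R 2 * (ybarKL α R 1 * b0 + xbarKL α R 2 * b1 + b2)
      + (ybarKL α R 2 * b1 + xbarKL α R 3 * b2 + b3) = x^2 * b1 := by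
  have h0 : R ≠ 0 := ne_of_gt hR
  have h1 : 1 + R ≠ 0 := by positivity
  have h2 : 2 + R ≠ 0 := by positivity
  have h3 : 3 + R ≠ 0 := by positivity
  have eb0 : b0 = (a1 + xKL α R 1 * a0)/x := by rw [eq_div_iff hx]; linear_combination hb0
  have eb1 : b1 = (a2 + xKL α R 2 * a1 + yKL α R 1 * a0)/x := by
    rw [eq_div_iff hx]; linear_combination hb1
  have eb2 : b2 = (a3 + xKL α R 3 * a2 + yKL α R 2 * a1)/x := by
    rw [eq_div_iff hx]; linear_combination hb2
  have eb3 : b3 = (a4 + xKL α R 4 * a3 + yKL α R 3 * a2)/x := by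
    rw [eq_div_iff hx]; linear_combination hb3
  have ea4 : a4 = x*a3 - (2*3+1+α)*a3 - (3*(3+α))*a2 := by linear_combination -hL3
  have ea3 : a3 = x*a2 - (2*2+1+α)*a2 - (2*(2+α))*a1 := by linear_combination -hL2
  have ea2 : a2 = x*a1 - (2+1+α)*a1 - (1*(1+α))*a0 := by linear_combination -hL1
  have ea1 : a1 = x*a0 - (1+α)*a0 := by linear_combination -hL0
  rw [eb0, eb1, eb2, eb3, ea4, ea3, ea2, ea1]
  simp only [xKL, yKL, xbarKL, ybarKL]
  push_cast
  rw [show (1:ℝ)-1+R = R from by ring, show (2:ℝ)-1+R = 1+R from by ring,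
      show (3:ℝ)-1+R = 2+R from by ring, show (4:ℝ)-1+R = 3+R from by ring]
  field_simp
  ring

set_option maxHeartbeats 4000000 in
lemma key2 (α R x : ℝ) (hx : x ≠ 0) (hR : 0 < R)
    (a0 a1 a2 a3 a4 a5 b0 b1 b2 b3 b4 : ℝ)
    (hb0 : x * b0 = a1 + xKL α R 1 * a0)
    (hb1 : x * b1 = a2 + xKL α R 2 * a1 + yKL α R 1 * a0)
    (hb2 : x * b2 = a3 + xKL α R 3 * a2 + yKL α R 2 * a1)
    (hb3 : x * b3 = a4 + xKL α R 4 * a3 + yKL α R 3 * a2)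
    (hb4 : x * b4 = a5 + xKL α R 5 * a4 + yKL α R 4 * a3)
    (hL0 : x * a0 = a1 + (1+α) * a0)
    (hL1 : x * a1 = a2 + (2+1+α) * a1 + (1*(1+α)) * a0)
    (hL2 : x * a2 = a3 + (2*2+1+α) * a2 + (2*(2+α)) * a1)
    (hL3 : x * a3 = a4 + (2*3+1+α) * a3 + (3*(3+α)) * a2)
    (hL4 : x * a4 = a5 + (2*4+1+α) * a4 + (4*(4+α)) * a3) :
    yKL α R 2 * (ybarKL α R 1 * b0 + xbarKL α R 2 * b1 + b2)
      + xKL α R 3 * (ybarKL α R 2 * b1 + xbarKL α R 3 * b2 + b3)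
      + (ybarKL α R 3 * b2 + xbarKL α R 4 * b3 + b4) = x^2 * b2 := by
  have h0 : R ≠ 0 := ne_of_gt hR
  have h1 : 1 + R ≠ 0 := by positivity
  have h2 : 2 + R ≠ 0 := by positivity
  have h3 : 3 + R ≠ 0 := by positivity
  have h4 : 4 + R ≠ 0 := by positivity
  have eb0 : b0 = (a1 + xKL α R 1 * a0)/x := by rw [eq_div_iff hx]; linear_combination hb0
  have eb1 : b1 = (a2 + xKL α R 2 * a1 + yKL α R 1 * a0)/x := by
    rw [eq_div_iff hx]; linear_combination hb1
  have eb2 : b2 = (a3 + xKL α R 3 * a2 + yKL α R 2 * a1)/x := by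
    rw [eq_div_iff hx]; linear_combination hb2
  have eb3 : b3 = (a4 + xKL α R 4 * a3 + yKL α R 3 * a2)/x := by
    rw [eq_div_iff hx]; linear_combination hb3
  have eb4 : b4 = (a5 + xKL α R 5 * a4 + yKL α R 4 * a3)/x := by
    rw [eq_div_iff hx]; linear_combination hb4
  have ea5 : a5 = x*a4 - (2*4+1+α)*a4 - (4*(4+α))*a3 := by linear_combination -hL4
  have ea4 : a4 = x*a3 - (2*3+1+α)*a3 - (3*(3+α))*a2 := by linear_combination -hL3
  have ea3 : a3 = x*a2 - (2*2+1+α)*a2 - (2*(2+α))*a1 := by linear_combination -hL2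
  have ea2 : a2 = x*a1 - (2+1+α)*a1 - (1*(1+α))*a0 := by linear_combination -hL1
  have ea1 : a1 = x*a0 - (1+α)*a0 := by linear_combination -hL0
  rw [eb0, eb1, eb2, eb3, eb4, ea5, ea4, ea3, ea2, ea1]
  simp only [xKL, yKL, xbarKL, ybarKL]
  push_cast
  rw [show (1:ℝ)-1+R = R from by ring, show (2:ℝ)-1+R = 1+R from by ring,
      show (3:ℝ)-1+R = 2+R from by ring, show (4:ℝ)-1+R = 3+R from by ring,
      show (5:ℝ)-1+R = 4+R from by ring]
  field_simp
  ring

set_option maxHeartbeats 1000000 in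
lemma key (α R x : ℝ) (hx : x ≠ 0) (hR : 0 < R) (m : ℕ)
    (a0 a1 a2 a3 a4 a5 a6 b1 b2 b3 b4 b5 : ℝ)
    (hb1 : x * b1 = a2 + xKL α R (m+2) * a1 + yKL α R (m+1) * a0)
    (hb2 : x * b2 = a3 + xKL α R (m+3) * a2 + yKL α R (m+2) * a1)
    (hb3 : x * b3 = a4 + xKL α R (m+4) * a3 + yKL α R (m+3) * a2)
    (hb4 : x * b4 = a5 + xKL α R (m+5) * a4 + yKL α R (m+4) * a3)
    (hb5 : x * b5 = a6 + xKL α R (m+6) * a5 + yKL α R (m+5) * a4)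
    (hL1 : x * a1 = a2 + (2*((m:ℝ)+1)+1+α) * a1 + (((m:ℝ)+1)*(((m:ℝ)+1)+α)) * a0)
    (hL2 : x * a2 = a3 + (2*((m:ℝ)+2)+1+α) * a2 + (((m:ℝ)+2)*(((m:ℝ)+2)+α)) * a1)
    (hL3 : x * a3 = a4 + (2*((m:ℝ)+3)+1+α) * a3 + (((m:ℝ)+3)*(((m:ℝ)+3)+α)) * a2)
    (hL4 : x * a4 = a5 + (2*((m:ℝ)+4)+1+α) * a4 + (((m:ℝ)+4)*(((m:ℝ)+4)+α)) * a3)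
    (hL5 : x * a5 = a6 + (2*((m:ℝ)+5)+1+α) * a5 + (((m:ℝ)+5)*(((m:ℝ)+5)+α)) * a4) :
    yKL α R (m+3) * (ybarKL α R (m+2) * b1 + xbarKL α R (m+3) * b2 + b3)
      + xKL α R (m+4) * (ybarKL α R (m+3) * b2 + xbarKL α R (m+4) * b3 + b4)
      + (ybarKL α R (m+4) * b3 + xbarKL α R (m+5) * b4 + b5) = x^2 * b3 := by
  have h1 : (m:ℝ) + 1 + R ≠ 0 := by positivity
  have h2 : (m:ℝ) + 2 + R ≠ 0 := by positivity
  have h3 : (m:ℝ) + 3 + R ≠ 0 := by positivity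
  have h4 : (m:ℝ) + 4 + R ≠ 0 := by positivity
  have h5 : (m:ℝ) + 5 + R ≠ 0 := by positivity
  have h6 : (m:ℝ) + 6 + R ≠ 0 := by positivity
  have r2 : x^2*a2 = a4 + ((2*((m:ℝ)+3)+1+α)+(2*((m:ℝ)+2)+1+α)) * a3
      + ((((m:ℝ)+3)*(((m:ℝ)+3)+α)) + (2*((m:ℝ)+2)+1+α)^2 + (((m:ℝ)+2)*(((m:ℝ)+2)+α))) * a2
      + (((m:ℝ)+2)*(((m:ℝ)+2)+α)) * ((2*((m:ℝ)+2)+1+α)+(2*((m:ℝ)+1)+1+α)) * a1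
      + (((m:ℝ)+2)*(((m:ℝ)+2)+α)) * (((m:ℝ)+1)*(((m:ℝ)+1)+α)) * a0 := by
    linear_combination x*hL2 + hL3 + (2*((m:ℝ)+2)+1+α)*hL2 + (((m:ℝ)+2)*(((m:ℝ)+2)+α))*hL1
  have r3 : x^2*a3 = a5 + ((2*((m:ℝ)+4)+1+α)+(2*((m:ℝ)+3)+1+α)) * a4
      + ((((m:ℝ)+4)*(((m:ℝ)+4)+α)) + (2*((m:ℝ)+3)+1+α)^2 + (((m:ℝ)+3)*(((m:ℝ)+3)+α))) * a3
      + (((m:ℝ)+3)*(((m:ℝ)+3)+α)) * ((2*((m:ℝ)+3)+1+α)+(2*((m:ℝ)+2)+1+α)) * a2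
      + (((m:ℝ)+3)*(((m:ℝ)+3)+α)) * (((m:ℝ)+2)*(((m:ℝ)+2)+α)) * a1 := by
    linear_combination x*hL3 + hL4 + (2*((m:ℝ)+3)+1+α)*hL3 + (((m:ℝ)+3)*(((m:ℝ)+3)+α))*hL2
  have r4 : x^2*a4 = a6 + ((2*((m:ℝ)+5)+1+α)+(2*((m:ℝ)+4)+1+α)) * a5
      + ((((m:ℝ)+5)*(((m:ℝ)+5)+α)) + (2*((m:ℝ)+4)+1+α)^2 + (((m:ℝ)+4)*(((m:ℝ)+4)+α))) * a4
      + (((m:ℝ)+4)*(((m:ℝ)+4)+α)) * ((2*((m:ℝ)+4)+1+α)+(2*((m:ℝ)+3)+1+α)) * a3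
      + (((m:ℝ)+4)*(((m:ℝ)+4)+α)) * (((m:ℝ)+3)*(((m:ℝ)+3)+α)) * a2 := by
    linear_combination x*hL4 + hL5 + (2*((m:ℝ)+4)+1+α)*hL4 + (((m:ℝ)+4)*(((m:ℝ)+4)+α))*hL3
  have cast2 : ((m:ℝ)+2)-1+R = (m:ℝ)+1+R := by ring
  have cast3 : ((m:ℝ)+3)-1+R = (m:ℝ)+2+R := by ring
  have cast4 : ((m:ℝ)+4)-1+R = (m:ℝ)+3+R := by ring
  have cast5 : ((m:ℝ)+5)-1+R = (m:ℝ)+4+R := by ring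
  have cast6 : ((m:ℝ)+6)-1+R = (m:ℝ)+5+R := by ring
  have e0 : (yKL α R (m+3) * ybarKL α R (m+2)) * yKL α R (m+1)
      = yKL α R (m+3) * ((((m:ℝ)+2)*(((m:ℝ)+2)+α)) * (((m:ℝ)+1)*(((m:ℝ)+1)+α))) := by
    simp only [yKL, ybarKL]; push_cast
    field_simp
    ring
  have e1 : (yKL α R (m+3) * ybarKL α R (m+2)) * xKL α R (m+2)
        + (yKL α R (m+3) * xbarKL α R (m+3) + xKL α R (m+4) * ybarKL α R (m+3)) * yKL α R (m+2)
      = xKL α R (m+4) * ((((m:ℝ)+3)*(((m:ℝ)+3)+α)) * (((m:ℝ)+2)*(((m:ℝ)+2)+α)))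
        + yKL α R (m+3) * ((((m:ℝ)+2)*(((m:ℝ)+2)+α)) * ((2*((m:ℝ)+2)+1+α)+(2*((m:ℝ)+1)+1+α))) := by
    simp only [xKL, yKL, xbarKL, ybarKL]; push_cast
    rw [cast2, cast4]
    field_simp
    ring
  have e2 : (yKL α R (m+3) * ybarKL α R (m+2))
        + (yKL α R (m+3) * xbarKL α R (m+3) + xKL α R (m+4) * ybarKL α R (m+3)) * xKL α R (m+3)
        + (yKL α R (m+3) + xKL α R (m+4) * xbarKL α R (m+4) + ybarKL α R (m+4)) * yKL α R (m+3)
      = (((m:ℝ)+4)*(((m:ℝ)+4)+α)) * (((m:ℝ)+3)*(((m:ℝ)+3)+α))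
        + xKL α R (m+4) * ((((m:ℝ)+3)*(((m:ℝ)+3)+α)) * ((2*((m:ℝ)+3)+1+α)+(2*((m:ℝ)+2)+1+α)))
        + yKL α R (m+3) * ((((m:ℝ)+3)*(((m:ℝ)+3)+α)) + (2*((m:ℝ)+2)+1+α)^2 + (((m:ℝ)+2)*(((m:ℝ)+2)+α))) := by
    simp only [xKL, yKL, xbarKL, ybarKL]; push_cast
    rw [cast3, cast4]
    field_simp
    ring
  have e3 : (yKL α R (m+3) * xbarKL α R (m+3) + xKL α R (m+4) * ybarKL α R (m+3))
        + (yKL α R (m+3) + xKL α R (m+4) * xbarKL α R (m+4) + ybarKL α R (m+4)) * xKL α R (m+4)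
        + (xKL α R (m+4) + xbarKL α R (m+5)) * yKL α R (m+4)
      = (((m:ℝ)+4)*(((m:ℝ)+4)+α)) * ((2*((m:ℝ)+4)+1+α)+(2*((m:ℝ)+3)+1+α))
        + xKL α R (m+4) * ((((m:ℝ)+4)*(((m:ℝ)+4)+α)) + (2*((m:ℝ)+3)+1+α)^2 + (((m:ℝ)+3)*(((m:ℝ)+3)+α)))
        + yKL α R (m+3) * ((2*((m:ℝ)+3)+1+α)+(2*((m:ℝ)+2)+1+α)) := by
    simp only [xKL, yKL, xbarKL, ybarKL]; push_cast
    rw [cast4]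
    field_simp
    ring
  have e4 : (yKL α R (m+3) + xKL α R (m+4) * xbarKL α R (m+4) + ybarKL α R (m+4))
        + (xKL α R (m+4) + xbarKL α R (m+5)) * xKL α R (m+5)
        + yKL α R (m+5)
      = (((m:ℝ)+5)*(((m:ℝ)+5)+α)) + (2*((m:ℝ)+4)+1+α)^2 + (((m:ℝ)+4)*(((m:ℝ)+4)+α))
        + xKL α R (m+4) * ((2*((m:ℝ)+4)+1+α)+(2*((m:ℝ)+3)+1+α))
        + yKL α R (m+3) := by
    simp only [xKL, yKL, xbarKL, ybarKL]; push_cast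
    rw [cast4, cast5]
    field_simp
    ring
  have e5 : (xKL α R (m+4) + xbarKL α R (m+5)) + xKL α R (m+6)
      = (2*((m:ℝ)+5)+1+α)+(2*((m:ℝ)+4)+1+α) + xKL α R (m+4) := by
    simp only [xKL, xbarKL]; push_cast
    rw [cast4, cast6]
    field_simp
    ring
  refine mul_left_cancel₀ hx ?_
  linear_combination
    (yKL α R (m+3) * ybarKL α R (m+2)) * hb1
    + (yKL α R (m+3) * xbarKL α R (m+3) + xKL α R (m+4) * ybarKL α R (m+3)) * hb2
    + (yKL α R (m+3) + xKL α R (m+4) * xbarKL α R (m+4) + ybarKL α R (m+4)) * hb3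
    + (xKL α R (m+4) + xbarKL α R (m+5)) * hb4
    + hb5
    - x^2 * hb3
    - r4 - xKL α R (m+4) * r3 - yKL α R (m+3) * r2
    + a0 * e0 + a1 * e1 + a2 * e2 + a3 * e3 + a4 * e4 + a5 * e5

theorem stmt9 (α R : ℝ) (hα : -1 < α) (hR : 0 < R)
    (p : ℕ → ℝ[X])
    (hp : ∀ n : ℕ, X * p n = Lag α (n + 1) + C (xKL α R (n + 1)) * Lag α n
      + C (yKL α R n) * (if n = 0 then 0 else Lag α (n - 1)))
    (s : ℕ → ℝ[X])
    (hs : ∀ n : ℕ, s n = C (ybarKL α R n) * (if n = 0 then 0 else p (n - 1))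
      + C (xbarKL α R (n + 1)) * p n + p (n + 1)) :
    ∀ n : ℕ,
      C (yKL α R n) * (if n = 0 then 0 else s (n - 1))
        + C (xKL α R (n + 1)) * s n + s (n + 1) = X ^ 2 * p n := by
  intro n
  rcases n with _ | _ | _ | m
  · -- n = 0
    rw [if_pos rfl, mul_zero, zero_add]
    have hs0 : s 0 = C (xbarKL α R 1) * p 0 + p 1 := by
      rw [hs 0, if_pos rfl, mul_zero, zero_add]
    have hs1 : s 1 = C (ybarKL α R 1) * p 0 + C (xbarKL α R 2) * p 1 + p 2 := by
      rw [hs 1, if_neg (by omega : ¬(1 = 0))]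
    rw [hs0, hs1]
    apply Polynomial.eq_of_infinite_eval_eq
    apply Set.Infinite.mono _ ((Set.finite_singleton (0:ℝ)).infinite_compl)
    intro x hx
    simp only [Set.mem_compl_iff, Set.mem_singleton_iff] at hx
    simp only [Set.mem_setOf_eq, eval_add, eval_mul, eval_C, eval_pow, eval_X]
    have q0 : x * eval x (p 0) = eval x (Lag α 1) + xKL α R 1 * eval x (Lag α 0) := by
      have h := congrArg (eval x) (hp 0)
      simpa using h
    have q1 : x * eval x (p 1) = eval x (Lag α 2) + xKL α R 2 * eval x (Lag α 1)
        + yKL α R 1 * eval x (Lag α 0) := by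
      have h := congrArg (eval x) (hp 1)
      simpa using h
    have q2 : x * eval x (p 2) = eval x (Lag α 3) + xKL α R 3 * eval x (Lag α 2)
        + yKL α R 2 * eval x (Lag α 1) := by
      have h := congrArg (eval x) (hp 2)
      simpa using h
    have l1 : x * eval x (Lag α 1) = eval x (Lag α 2) + (2+1+α) * eval x (Lag α 1)
        + (1*(1+α)) * eval x (Lag α 0) := by
      have h := evalXLag α x 0; norm_num at h ⊢; linear_combination h
    have l2 : x * eval x (Lag α 2) = eval x (Lag α 3) + (2*2+1+α) * eval x (Lag α 2)
        + (2*(2+α)) * eval x (Lag α 1) := by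
      have h := evalXLag α x 1; norm_num at h ⊢; linear_combination h
    exact key0 α R x hx hR (eval x (Lag α 0)) (eval x (Lag α 1)) (eval x (Lag α 2))
      (eval x (Lag α 3)) (eval x (p 0)) (eval x (p 1)) (eval x (p 2))
      q0 q1 q2 (evalXLag0 α x) l1 l2
  · -- n = 1
    rw [if_neg (by omega : ¬(0+1 = 0))]
    have hs0 : s 0 = C (xbarKL α R 1) * p 0 + p 1 := by
      rw [hs 0, if_pos rfl, mul_zero, zero_add]
    have hs1 : s 1 = C (ybarKL α R 1) * p 0 + C (xbarKL α R 2) * p 1 + p 2 := by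
      rw [hs 1, if_neg (by omega : ¬(1 = 0))]
    have hs2 : s 2 = C (ybarKL α R 2) * p 1 + C (xbarKL α R 3) * p 2 + p 3 := by
      rw [hs 2, if_neg (by omega : ¬(2 = 0))]
    show C (yKL α R 1) * s 0 + C (xKL α R 2) * s 1 + s 2 = X^2 * p 1
    rw [hs0, hs1, hs2]
    apply Polynomial.eq_of_infinite_eval_eq
    apply Set.Infinite.mono _ ((Set.finite_singleton (0:ℝ)).infinite_compl)
    intro x hx
    simp only [Set.mem_compl_iff, Set.mem_singleton_iff] at hx
    simp only [Set.mem_setOf_eq, eval_add, eval_mul, eval_C, eval_pow, eval_X]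
    have q0 : x * eval x (p 0) = eval x (Lag α 1) + xKL α R 1 * eval x (Lag α 0) := by
      have h := congrArg (eval x) (hp 0)
      simpa using h
    have q1 : x * eval x (p 1) = eval x (Lag α 2) + xKL α R 2 * eval x (Lag α 1)
        + yKL α R 1 * eval x (Lag α 0) := by
      have h := congrArg (eval x) (hp 1)
      simpa using h
    have q2 : x * eval x (p 2) = eval x (Lag α 3) + xKL α R 3 * eval x (Lag α 2)
        + yKL α R 2 * eval x (Lag α 1) := by
      have h := congrArg (eval x) (hp 2)
      simpa using h
    have q3 : x * eval x (p 3) = eval x (Lag α 4) + xKL α R 4 * eval x (Lag α 3)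
        + yKL α R 3 * eval x (Lag α 2) := by
      have h := congrArg (eval x) (hp 3)
      simpa using h
    have l1 : x * eval x (Lag α 1) = eval x (Lag α 2) + (2+1+α) * eval x (Lag α 1)
        + (1*(1+α)) * eval x (Lag α 0) := by
      have h := evalXLag α x 0; norm_num at h ⊢; linear_combination h
    have l2 : x * eval x (Lag α 2) = eval x (Lag α 3) + (2*2+1+α) * eval x (Lag α 2)
        + (2*(2+α)) * eval x (Lag α 1) := by
      have h := evalXLag α x 1; norm_num at h ⊢; linear_combination h
    have l3 : x * eval x (Lag α 3) = eval x (Lag α 4) + (2*3+1+α) * eval x (Lag α 3)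
        + (3*(3+α)) * eval x (Lag α 2) := by
      have h := evalXLag α x 2; norm_num at h ⊢; linear_combination h
    exact key1 α R x hx hR (eval x (Lag α 0)) (eval x (Lag α 1)) (eval x (Lag α 2))
      (eval x (Lag α 3)) (eval x (Lag α 4))
      (eval x (p 0)) (eval x (p 1)) (eval x (p 2)) (eval x (p 3))
      q0 q1 q2 q3 (evalXLag0 α x) l1 l2 l3
  · -- n = 2
    rw [if_neg (by omega : ¬(0+1+1 = 0))]
    have hs1 : s 1 = C (ybarKL α R 1) * p 0 + C (xbarKL α R 2) * p 1 + p 2 := by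
      rw [hs 1, if_neg (by omega : ¬(1 = 0))]
    have hs2 : s 2 = C (ybarKL α R 2) * p 1 + C (xbarKL α R 3) * p 2 + p 3 := by
      rw [hs 2, if_neg (by omega : ¬(2 = 0))]
    have hs3 : s 3 = C (ybarKL α R 3) * p 2 + C (xbarKL α R 4) * p 3 + p 4 := by
      rw [hs 3, if_neg (by omega : ¬(3 = 0))]
    show C (yKL α R 2) * s 1 + C (xKL α R 3) * s 2 + s 3 = X^2 * p 2
    rw [hs1, hs2, hs3]
    apply Polynomial.eq_of_infinite_eval_eq
    apply Set.Infinite.mono _ ((Set.finite_singleton (0:ℝ)).infinite_compl)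
    intro x hx
    simp only [Set.mem_compl_iff, Set.mem_singleton_iff] at hx
    simp only [Set.mem_setOf_eq, eval_add, eval_mul, eval_C, eval_pow, eval_X]
    have q0 : x * eval x (p 0) = eval x (Lag α 1) + xKL α R 1 * eval x (Lag α 0) := by
      have h := congrArg (eval x) (hp 0)
      simpa using h
    have q1 : x * eval x (p 1) = eval x (Lag α 2) + xKL α R 2 * eval x (Lag α 1)
        + yKL α R 1 * eval x (Lag α 0) := by
      have h := congrArg (eval x) (hp 1)
      simpa using h
    have q2 : x * eval x (p 2) = eval x (Lag α 3) + xKL α R 3 * eval x (Lag α 2)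
        + yKL α R 2 * eval x (Lag α 1) := by
      have h := congrArg (eval x) (hp 2)
      simpa using h
    have q3 : x * eval x (p 3) = eval x (Lag α 4) + xKL α R 4 * eval x (Lag α 3)
        + yKL α R 3 * eval x (Lag α 2) := by
      have h := congrArg (eval x) (hp 3)
      simpa using h
    have q4 : x * eval x (p 4) = eval x (Lag α 5) + xKL α R 5 * eval x (Lag α 4)
        + yKL α R 4 * eval x (Lag α 3) := by
      have h := congrArg (eval x) (hp 4)
      simpa using h
    have l1 : x * eval x (Lag α 1) = eval x (Lag α 2) + (2+1+α) * eval x (Lag α 1)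
        + (1*(1+α)) * eval x (Lag α 0) := by
      have h := evalXLag α x 0; norm_num at h ⊢; linear_combination h
    have l2 : x * eval x (Lag α 2) = eval x (Lag α 3) + (2*2+1+α) * eval x (Lag α 2)
        + (2*(2+α)) * eval x (Lag α 1) := by
      have h := evalXLag α x 1; norm_num at h ⊢; linear_combination h
    have l3 : x * eval x (Lag α 3) = eval x (Lag α 4) + (2*3+1+α) * eval x (Lag α 3)
        + (3*(3+α)) * eval x (Lag α 2) := by
      have h := evalXLag α x 2; norm_num at h ⊢; linear_combination h
    have l4 : x * eval x (Lag α 4) = eval x (Lag α 5) + (2*4+1+α) * eval x (Lag α 4)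
        + (4*(4+α)) * eval x (Lag α 3) := by
      have h := evalXLag α x 3; norm_num at h ⊢; linear_combination h
    exact key2 α R x hx hR (eval x (Lag α 0)) (eval x (Lag α 1)) (eval x (Lag α 2))
      (eval x (Lag α 3)) (eval x (Lag α 4)) (eval x (Lag α 5))
      (eval x (p 0)) (eval x (p 1)) (eval x (p 2)) (eval x (p 3)) (eval x (p 4))
      q0 q1 q2 q3 q4 (evalXLag0 α x) l1 l2 l3 l4
  · -- n = m+3
    rw [if_neg (by omega : ¬(m+1+1+1 = 0))]
    show C (yKL α R (m+3)) * s (m+2) + C (xKL α R (m+4)) * s (m+3) + s (m+4)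
        = X^2 * p (m+3)
    have hs2 : s (m+2) = C (ybarKL α R (m+2)) * p (m+1) + C (xbarKL α R (m+3)) * p (m+2)
        + p (m+3) := by rw [hs (m+2), if_neg (by omega : ¬(m+2 = 0))]; rfl
    have hs3 : s (m+3) = C (ybarKL α R (m+3)) * p (m+2) + C (xbarKL α R (m+4)) * p (m+3)
        + p (m+4) := by rw [hs (m+3), if_neg (by omega : ¬(m+3 = 0))]; rfl
    have hs4 : s (m+4) = C (ybarKL α R (m+4)) * p (m+3) + C (xbarKL α R (m+5)) * p (m+4)
        + p (m+5) := by rw [hs (m+4), if_neg (by omega : ¬(m+4 = 0))]; rfl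
    rw [hs2, hs3, hs4]
    apply Polynomial.eq_of_infinite_eval_eq
    apply Set.Infinite.mono _ ((Set.finite_singleton (0:ℝ)).infinite_compl)
    intro x hx
    simp only [Set.mem_compl_iff, Set.mem_singleton_iff] at hx
    simp only [Set.mem_setOf_eq, eval_add, eval_mul, eval_C, eval_pow, eval_X]
    have q1 : x * eval x (p (m+1)) = eval x (Lag α (m+2)) + xKL α R (m+2) * eval x (Lag α (m+1))
        + yKL α R (m+1) * eval x (Lag α m) := by
      have h : X * p (m+1) = Lag α (m+2) + C (xKL α R (m+2)) * Lag α (m+1)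
          + C (yKL α R (m+1)) * Lag α m := by
        have h0 := hp (m+1); rw [if_neg (by omega : ¬(m+1 = 0))] at h0; exact h0
      have h' := congrArg (eval x) h
      simpa using h'
    have q2 : x * eval x (p (m+2)) = eval x (Lag α (m+3)) + xKL α R (m+3) * eval x (Lag α (m+2))
        + yKL α R (m+2) * eval x (Lag α (m+1)) := by
      have h : X * p (m+2) = Lag α (m+3) + C (xKL α R (m+3)) * Lag α (m+2)
          + C (yKL α R (m+2)) * Lag α (m+1) := by
        have h0 := hp (m+2); rw [if_neg (by omega : ¬(m+2 = 0))] at h0; exact h0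
      have h' := congrArg (eval x) h
      simpa using h'
    have q3 : x * eval x (p (m+3)) = eval x (Lag α (m+4)) + xKL α R (m+4) * eval x (Lag α (m+3))
        + yKL α R (m+3) * eval x (Lag α (m+2)) := by
      have h : X * p (m+3) = Lag α (m+4) + C (xKL α R (m+4)) * Lag α (m+3)
          + C (yKL α R (m+3)) * Lag α (m+2) := by
        have h0 := hp (m+3); rw [if_neg (by omega : ¬(m+3 = 0))] at h0; exact h0
      have h' := congrArg (eval x) h
      simpa using h'
    have q4 : x * eval x (p (m+4)) = eval x (Lag α (m+5)) + xKL α R (m+5) * eval x (Lag α (m+4))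
        + yKL α R (m+4) * eval x (Lag α (m+3)) := by
      have h : X * p (m+4) = Lag α (m+5) + C (xKL α R (m+5)) * Lag α (m+4)
          + C (yKL α R (m+4)) * Lag α (m+3) := by
        have h0 := hp (m+4); rw [if_neg (by omega : ¬(m+4 = 0))] at h0; exact h0
      have h' := congrArg (eval x) h
      simpa using h'
    have q5 : x * eval x (p (m+5)) = eval x (Lag α (m+6)) + xKL α R (m+6) * eval x (Lag α (m+5))
        + yKL α R (m+5) * eval x (Lag α (m+4)) := by
      have h : X * p (m+5) = Lag α (m+6) + C (xKL α R (m+6)) * Lag α (m+5)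
          + C (yKL α R (m+5)) * Lag α (m+4) := by
        have h0 := hp (m+5); rw [if_neg (by omega : ¬(m+5 = 0))] at h0; exact h0
      have h' := congrArg (eval x) h
      simpa using h'
    have l1 : x * eval x (Lag α (m+1)) = eval x (Lag α (m+2))
        + (2*((m:ℝ)+1)+1+α) * eval x (Lag α (m+1))
        + (((m:ℝ)+1)*(((m:ℝ)+1)+α)) * eval x (Lag α m) := evalXLag α x m
    have l2 : x * eval x (Lag α (m+2)) = eval x (Lag α (m+3))
        + (2*((m:ℝ)+2)+1+α) * eval x (Lag α (m+2))
        + (((m:ℝ)+2)*(((m:ℝ)+2)+α)) * eval x (Lag α (m+1)) := by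
      have h : x * eval x (Lag α (m+2)) = eval x (Lag α (m+3))
          + (2*((↑(m+1):ℝ)+1)+1+α) * eval x (Lag α (m+2))
          + (((↑(m+1):ℝ)+1)*(((↑(m+1):ℝ)+1)+α)) * eval x (Lag α (m+1)) := evalXLag α x (m+1)
      push_cast at h
      linear_combination h
    have l3 : x * eval x (Lag α (m+3)) = eval x (Lag α (m+4))
        + (2*((m:ℝ)+3)+1+α) * eval x (Lag α (m+3))
        + (((m:ℝ)+3)*(((m:ℝ)+3)+α)) * eval x (Lag α (m+2)) := by
      have h : x * eval x (Lag α (m+3)) = eval x (Lag α (m+4))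
          + (2*((↑(m+2):ℝ)+1)+1+α) * eval x (Lag α (m+3))
          + (((↑(m+2):ℝ)+1)*(((↑(m+2):ℝ)+1)+α)) * eval x (Lag α (m+2)) := evalXLag α x (m+2)
      push_cast at h
      linear_combination h
    have l4 : x * eval x (Lag α (m+4)) = eval x (Lag α (m+5))
        + (2*((m:ℝ)+4)+1+α) * eval x (Lag α (m+4))
        + (((m:ℝ)+4)*(((m:ℝ)+4)+α)) * eval x (Lag α (m+3)) := by
      have h : x * eval x (Lag α (m+4)) = eval x (Lag α (m+5))
          + (2*((↑(m+3):ℝ)+1)+1+α) * eval x (Lag α (m+4))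
          + (((↑(m+3):ℝ)+1)*(((↑(m+3):ℝ)+1)+α)) * eval x (Lag α (m+3)) := evalXLag α x (m+3)
      push_cast at h
      linear_combination h
    have l5 : x * eval x (Lag α (m+5)) = eval x (Lag α (m+6))
        + (2*((m:ℝ)+5)+1+α) * eval x (Lag α (m+5))
        + (((m:ℝ)+5)*(((m:ℝ)+5)+α)) * eval x (Lag α (m+4)) := by
      have h : x * eval x (Lag α (m+5)) = eval x (Lag α (m+6))
          + (2*((↑(m+4):ℝ)+1)+1+α) * eval x (Lag α (m+5))
          + (((↑(m+4):ℝ)+1)*(((↑(m+4):ℝ)+1)+α)) * eval x (Lag α (m+4)) := evalXLag α x (m+4)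
      push_cast at h
      linear_combination h
    exact key α R x hx hR m (eval x (Lag α m)) (eval x (Lag α (m+1))) (eval x (Lag α (m+2)))
      (eval x (Lag α (m+3))) (eval x (Lag α (m+4))) (eval x (Lag α (m+5))) (eval x (Lag α (m+6)))
      (eval x (p (m+1))) (eval x (p (m+2))) (eval x (p (m+3))) (eval x (p (m+4)))
      (eval x (p (m+5)))
      q1 q2 q3 q4 q5 l1 l2 l3 l4 l5
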